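/- arXiv:2012.12751 — 6 statements merged into one kernel-verified Lean document; each statement's English description precedes it below -/
import Mathlib

section
/- Let e₁, e₂ ∈ ℝ² be linearly independent vectors and set e₃ = −e₁ − e₂ (so that e₁, e₂, e₃ are the edge vectors of a non-degenerate triangle), and let C > 0. Then there exists a unique real symmetric positive definite 2 × 2 matrix 𝓜 such that eₖᵀ 𝓜 eₖ = C for k = 1, 2, 3. -/
/-!
Let `B` be the matrix with rows `e₁, e₂`, invertible by linear independence. For symmetric `𝓜`,
polarization turns `e₃ᵀ 𝓜 e₃ = C` with `e₃ = -(e₁ + e₂)` into `e₁ᵀ 𝓜 e₂ = -C/2`, so the three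
conditions say exactly that the Gram matrix `B 𝓜 Bᵀ` is `G = C • !![1, -1/2; -1/2, 1]`. This
forces `𝓜 = B⁻¹ G B⁻ᵀ`, which is positive definite because `G` is and congruence by an
invertible matrix preserves positive definiteness.
-/

open Matrix

namespace Matrix

variable {m n R : Type*} [Fintype n] [CommRing R]

theorem of_mul_mul_transpose_of_apply (v : m → n → R) (M : Matrix n n R) (i j : m) :
    (of v * M * (of v)ᵀ) i j = v i ⬝ᵥ (M *ᵥ v j) := by
  rw [mul_apply', dotProduct_mulVec]
  rfl

theorem IsSymm.dotProduct_mulVec_comm {M : Matrix n n R} (hM : M.IsSymm) (v w : n → R) :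
    v ⬝ᵥ (M *ᵥ w) = w ⬝ᵥ (M *ᵥ v) := by
  rw [dotProduct_mulVec, ← mulVec_transpose, hM.eq, dotProduct_comm]

theorem IsSymm.dotProduct_mulVec_add_add {M : Matrix n n R} (hM : M.IsSymm) (v w : n → R) :
    (v + w) ⬝ᵥ (M *ᵥ (v + w)) = v ⬝ᵥ (M *ᵥ v) + 2 * v ⬝ᵥ (M *ᵥ w) + w ⬝ᵥ (M *ᵥ w) := by
  rw [mulVec_add, add_dotProduct, dotProduct_add, dotProduct_add, hM.dotProduct_mulVec_comm w v]
  ring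

theorem mul_mul_transpose_eq_iff [DecidableEq n] {B : Matrix n n R} (hB : IsUnit B)
    {M Q : Matrix n n R} : B * M * Bᵀ = Q ↔ M = B⁻¹ * Q * B⁻¹ᵀ := by
  have := hB.invertible
  constructor
  · rintro rfl
    simp [Matrix.mul_assoc, transpose_nonsing_inv]
  · rintro rfl
    simp [Matrix.mul_assoc, transpose_nonsing_inv]

end Matrix

section EquilateralTriangle

variable {K : Type*} [Field K]

def equilateralGram (C : K) : Matrix (Fin 2) (Fin 2) K := !![C, -(C / 2); -(C / 2), C]

theorem of_mul_mul_transpose_of_eq_equilateralGram_iff [NeZero (2 : K)]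
    {M : Matrix (Fin 2) (Fin 2) K} (hM : M.IsSymm) (e₁ e₂ : Fin 2 → K) (C : K) :
    of ![e₁, e₂] * M * (of ![e₁, e₂])ᵀ = equilateralGram C ↔
      e₁ ⬝ᵥ (M *ᵥ e₁) = C ∧ e₂ ⬝ᵥ (M *ᵥ e₂) = C ∧
        (-e₁ - e₂) ⬝ᵥ (M *ᵥ (-e₁ - e₂)) = C := by
  rw [← Matrix.ext_iff]
  simp only [Fin.forall_fin_two, of_mul_mul_transpose_of_apply, equilateralGram, of_apply,
    cons_val_zero, cons_val_one, hM.dotProduct_mulVec_comm e₂ e₁]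
  rw [← neg_add', neg_dotProduct, mulVec_neg, dotProduct_neg, neg_neg,
    hM.dotProduct_mulVec_add_add]
  have h2 : (2 : K) ≠ 0 := two_ne_zero
  constructor
  · rintro ⟨⟨h11, h12⟩, -, h22⟩
    refine ⟨h11, h22, ?_⟩
    rw [h11, h12, h22]
    field_simp
    ring
  · rintro ⟨h11, h22, h33⟩
    have h12 : e₁ ⬝ᵥ (M *ᵥ e₂) = -(C / 2) := by
      field_simp
      linear_combination h33 - h11 - h22
    exact ⟨⟨h11, h12⟩, h12, h22⟩

theorem equilateralGram_posDef {C : ℝ} (hC : 0 < C) : (equilateralGram C).PosDef := by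
  have hdecomp : equilateralGram C = (C / 2) • (1 + vecMulVec ![1, -1] (star ![1, -1])) := by
    ext i j
    fin_cases i <;> fin_cases j <;> simp [equilateralGram, vecMulVec] <;> ring
  rw [hdecomp]
  exact (PosDef.one.add_posSemidef (posSemidef_vecMulVec_self_star _)).smul (by positivity)

end EquilateralTriangle

/-- For a non-degenerate triangle with edge vectors `e₁, e₂, e₃ = −e₁ − e₂` and a
constant `C > 0`, there exists a unique symmetric positive definite `2 × 2` metric
tensor `𝓜` such that `eₖᵀ 𝓜 eₖ = C` for `k = 1, 2, 3`. -/
theorem metric_tensor_exists_unique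
    (e₁ e₂ : Fin 2 → ℝ) (hind : LinearIndependent ℝ ![e₁, e₂])
    (e₃ : Fin 2 → ℝ) (he₃ : e₃ = -e₁ - e₂) (C : ℝ) (hC : 0 < C) :
    ∃! 𝓜 : Matrix (Fin 2) (Fin 2) ℝ,
      𝓜.IsSymm ∧ 𝓜.PosDef ∧
        e₁ ⬝ᵥ (𝓜 *ᵥ e₁) = C ∧ e₂ ⬝ᵥ (𝓜 *ᵥ e₂) = C ∧ e₃ ⬝ᵥ (𝓜 *ᵥ e₃) = C := by
  subst he₃
  set B := of ![e₁, e₂]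
  set M₀ := B⁻¹ * equilateralGram C * B⁻¹ᵀ
  have hB : IsUnit B := linearIndependent_rows_iff_isUnit.mp hind
  have hchar (M : Matrix (Fin 2) (Fin 2) ℝ) (hM : M.IsSymm) :
      (e₁ ⬝ᵥ (M *ᵥ e₁) = C ∧ e₂ ⬝ᵥ (M *ᵥ e₂) = C ∧ (-e₁ - e₂) ⬝ᵥ (M *ᵥ (-e₁ - e₂)) = C) ↔
        M = M₀ :=
    (of_mul_mul_transpose_of_eq_equilateralGram_iff hM e₁ e₂ C).symm.trans
      (mul_mul_transpose_eq_iff hB)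
  have hpos : M₀.PosDef :=
    (IsUnit.posDef_star_right_conjugate_iff (isUnit_nonsing_inv_iff.mpr hB)).mpr
      (equilateralGram_posDef hC)
  have hsymm : M₀.IsSymm := isHermitian_iff_isSymm.mp hpos.isHermitian
  exact ⟨M₀, ⟨hsymm, hpos, (hchar M₀ hsymm).mpr rfl⟩, fun M ⟨hM, _, h⟩ => (hchar M hM).mp h⟩
end

section
/- Let (Ω, μ) be a measure space, p a natural number, N > 0, and A : Ω → ℝ a nonnegative measurable function with 0 < ∫_Ω A^{1/(p+2)} dμ < ∞. Define d*(x) = N · A(x)^{1/(p+2)} / ∫_Ω A^{1/(p+2)} dμ. Then ∫_Ω d* dμ = N, and for every measurable d : Ω → ℝ with d > 0 a.e. and ∫_Ω d dμ = N, one has ∫_Ω A · d^{−(p+1)} dμ ≥ ∫_Ω A · (d*)^{−(p+1)} dμ (where the integrand is interpreted as 0 where A = 0). -/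
open MeasureTheory

/-! Write `r = 1/(s+1)` with `s = p + 1`. Pointwise `A^r = (A d^{-s})^r · d^{s r}`, so Hölder's
inequality with exponents `s + 1` and `(s+1)/s` gives
`(∫ A^r)^{s+1} ≤ (∫ A d^{-s}) (∫ d)^s` for every positive density `d`. The optimal density is
proportional to `A^r`, and for it the integrand `A d*^{-s}` is a constant multiple of `A^r`,
which turns this inequality into an equality. -/

namespace Real

variable {a s : ℝ}

theorem mul_rpow_neg_rpow_mul_rpow (ha : 0 ≤ a) {t : ℝ} (ht : 0 < t) (hs : 0 ≤ s) :
    (a * t ^ (-s)) ^ (1 / (s + 1)) * t ^ (s / (s + 1)) = a ^ (1 / (s + 1)) := by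
  rw [mul_rpow ha (rpow_nonneg ht.le _), ← rpow_mul ht.le, mul_assoc, ← rpow_add ht]
  have hexp : -s * (1 / (s + 1)) + s / (s + 1) = 0 := by field_simp; ring
  rw [hexp, rpow_zero, mul_one]

theorem mul_const_mul_rpow_rpow_neg (ha : 0 ≤ a) {c : ℝ} (hc : 0 < c) (hs : 0 ≤ s) :
    a * (c * a ^ (1 / (s + 1))) ^ (-s) = c⁻¹ ^ s * a ^ (1 / (s + 1)) := by
  have hr : 1 / (s + 1) ≠ 0 := by positivity
  rcases ha.eq_or_lt with rfl | ha
  · rw [zero_mul, zero_rpow hr, mul_zero]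
  have hexp : 1 + 1 / (s + 1) * -s = 1 / (s + 1) := by field_simp; ring
  rw [mul_rpow hc.le (rpow_nonneg ha.le _), ← rpow_mul ha.le, rpow_neg hc.le, ← inv_rpow hc.le,
    mul_left_comm, ← rpow_one_add' ha.le (by rw [hexp]; exact hr), hexp]

end Real

namespace ENNReal

variable {s : ℝ}

theorem div_rpow_mul_le_of_rpow_add_one_le {a b c : ℝ≥0∞} (hs : 0 ≤ s)
    (h : a ^ (s + 1) ≤ c * b ^ s) : (a / b) ^ s * a ≤ c := by
  have hsucc : a ^ (s + 1) = a ^ s * a := by rw [rpow_add_of_nonneg _ _ hs zero_le_one, rpow_one]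
  rw [div_rpow_of_nonneg _ _ hs, div_eq_mul_inv, mul_right_comm, ← div_eq_mul_inv, ← hsucc]
  exact div_le_of_le_mul h

theorem lintegral_rpow_mul_rpow_pow_le {Ω : Type*} [MeasurableSpace Ω] {μ : Measure Ω}
    {f g : Ω → ℝ≥0∞} (hf : AEMeasurable f μ) (hg : AEMeasurable g μ) (hs : 0 ≤ s) :
    (∫⁻ x, f x ^ (1 / (s + 1)) * g x ^ (s / (s + 1)) ∂μ) ^ (s + 1) ≤
      (∫⁻ x, f x ∂μ) * (∫⁻ x, g x ∂μ) ^ s := by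
  have holder := lintegral_mul_norm_pow_le hf hg (p := 1 / (s + 1)) (q := s / (s + 1))
    (by positivity) (by positivity)
    (by rw [← add_div, add_comm, div_self (by positivity)])
  calc _ ≤ ((∫⁻ x, f x ∂μ) ^ (1 / (s + 1)) * (∫⁻ x, g x ∂μ) ^ (s / (s + 1))) ^ (s + 1) :=
        rpow_le_rpow holder (by linarith)
    _ = (∫⁻ x, f x ∂μ) * (∫⁻ x, g x ∂μ) ^ s := by
        rw [mul_rpow_of_nonneg _ _ (by linarith), ← rpow_mul, ← rpow_mul]
        have h1 : 1 / (s + 1) * (s + 1) = 1 := by field_simp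
        have h2 : s / (s + 1) * (s + 1) = s := by field_simp
        rw [h1, h2, rpow_one]

end ENNReal

section MeshError

variable {Ω : Type*} [MeasurableSpace Ω] {μ : Measure Ω} {A : Ω → ℝ} {s : ℝ}

theorem lintegral_rpow_pow_le_lintegral_mul_rpow_neg_mul (hs : 0 ≤ s) (hA : AEMeasurable A μ)
    (hA0 : 0 ≤ᵐ[μ] A) {d : Ω → ℝ} (hd : AEMeasurable d μ) (hdpos : ∀ᵐ x ∂μ, 0 < d x) :
    (∫⁻ x, ENNReal.ofReal (A x ^ (1 / (s + 1))) ∂μ) ^ (s + 1) ≤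
      (∫⁻ x, ENNReal.ofReal (A x * d x ^ (-s)) ∂μ) * (∫⁻ x, ENNReal.ofReal (d x) ∂μ) ^ s := by
  refine le_of_eq_of_le ?_ (ENNReal.lintegral_rpow_mul_rpow_pow_le
    (hA.mul (hd.pow_const _)).ennreal_ofReal hd.ennreal_ofReal hs)
  congr 1
  refine lintegral_congr_ae ?_
  filter_upwards [hA0, hdpos] with x hAx hdx
  rw [ENNReal.ofReal_rpow_of_nonneg (mul_nonneg hAx (Real.rpow_nonneg hdx.le _)) (by positivity),
    ENNReal.ofReal_rpow_of_nonneg hdx.le (by positivity),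
    ← ENNReal.ofReal_mul (Real.rpow_nonneg (mul_nonneg hAx (Real.rpow_nonneg hdx.le _)) _),
    Real.mul_rpow_neg_rpow_mul_rpow hAx hdx hs]

theorem lintegral_mul_const_mul_rpow_rpow_neg (hs : 0 ≤ s) (hA0 : 0 ≤ᵐ[μ] A) {c : ℝ}
    (hc : 0 < c) :
    ∫⁻ x, ENNReal.ofReal (A x * (c * A x ^ (1 / (s + 1))) ^ (-s)) ∂μ =
      ENNReal.ofReal c⁻¹ ^ s * ∫⁻ x, ENNReal.ofReal (A x ^ (1 / (s + 1))) ∂μ := by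
  rw [ENNReal.ofReal_rpow_of_nonneg (inv_nonneg.2 hc.le) hs,
    ← lintegral_const_mul' _ _ ENNReal.ofReal_ne_top]
  refine lintegral_congr_ae ?_
  filter_upwards [hA0] with x hAx
  rw [Real.mul_const_mul_rpow_rpow_neg hAx hc hs,
    ENNReal.ofReal_mul (Real.rpow_nonneg (inv_nonneg.2 hc.le) _)]

end MeshError

/-- The optimal mesh density `d*(x) = N·A(x)^{1/(p+2)} / ∫ A^{1/(p+2)} dμ` has
complexity `∫ d* dμ = N`, and it minimizes the continuous error estimate
`∫ A · d^{−(p+1)} dμ` among all positive densities of complexity `N`. -/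
theorem optimal_density_complexity_and_minimality
    {Ω : Type*} [MeasurableSpace Ω] (μ : Measure Ω) (p : ℕ) (N : ℝ) (hN : 0 < N)
    (A : Ω → ℝ) (hAmeas : Measurable A) (hAnonneg : ∀ x, 0 ≤ A x)
    (hInt : Integrable (fun x => A x ^ (1 / (p + 2 : ℝ))) μ)
    (hIpos : 0 < ∫ x, A x ^ (1 / (p + 2 : ℝ)) ∂μ)
    (dstar : Ω → ℝ)
    (hdstar : ∀ x, dstar x =
      N * A x ^ (1 / (p + 2 : ℝ)) / ∫ y, A y ^ (1 / (p + 2 : ℝ)) ∂μ) :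
    (∫ x, dstar x ∂μ = N) ∧
      ∀ d : Ω → ℝ, Measurable d → (∀ᵐ x ∂μ, 0 < d x) → (∫ x, d x ∂μ = N) →
        ∫⁻ x, ENNReal.ofReal (A x * dstar x ^ (-(p + 1 : ℝ))) ∂μ ≤
          ∫⁻ x, ENNReal.ofReal (A x * d x ^ (-(p + 1 : ℝ))) ∂μ := by
  have hs : (0 : ℝ) ≤ p + 1 := by positivity
  rw [show (p + 2 : ℝ) = (p + 1 : ℝ) + 1 by ring] at hInt hIpos hdstar
  set I := ∫ x, A x ^ (1 / ((p + 1 : ℝ) + 1)) ∂μ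
  have hA0 : 0 ≤ᵐ[μ] A := ae_of_all _ hAnonneg
  have hdstar_eq : dstar = fun x => N / I * A x ^ (1 / ((p + 1 : ℝ) + 1)) :=
    funext fun x => by rw [hdstar x]; ring
  have hI : ∫⁻ x, ENNReal.ofReal (A x ^ (1 / ((p + 1 : ℝ) + 1))) ∂μ = ENNReal.ofReal I :=
    (ofReal_integral_eq_lintegral_ofReal hInt (ae_of_all _ fun x => Real.rpow_nonneg (hAnonneg x) _)).symm
  refine ⟨by rw [hdstar_eq, integral_const_mul]; exact div_mul_cancel₀ N hIpos.ne', fun d hd hdpos hdN => ?_⟩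
  have hdN' : ∫⁻ x, ENNReal.ofReal (d x) ∂μ = ENNReal.ofReal N := by
    rw [← ofReal_integral_eq_lintegral_ofReal (Integrable.of_integral_ne_zero (hdN ▸ hN.ne'))
      (hdpos.mono fun _ => le_of_lt), hdN]
  calc _ = (ENNReal.ofReal I / ENNReal.ofReal N) ^ (p + 1 : ℝ) * ENNReal.ofReal I := by
        rw [hdstar_eq, lintegral_mul_const_mul_rpow_rpow_neg hs hA0 (div_pos hN hIpos), hI,
          inv_div, ENNReal.ofReal_div_of_pos hN]
    _ ≤ _ := ENNReal.div_rpow_mul_le_of_rpow_add_one_le hs <| by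
        rw [← hI, ← hdN']
        exact lintegral_rpow_pow_le_lintegral_mul_rpow_neg_mul hs hAmeas.aemeasurable hA0
          hd.aemeasurable hdpos
end

section
/- Let (Ω, μ) be a measure space, p a natural number, N > 0, and A : Ω → ℝ a nonnegative measurable function with 0 < ∫_Ω A^{1/(p+2)} dμ < ∞. Define d*(x) = N · A(x)^{1/(p+2)} / ∫_Ω A^{1/(p+2)} dμ. Then the minimal value of the continuous error estimate is ∫_Ω A · (d*)^{−(p+1)} dμ = N^{−(p+1)} · (∫_Ω A^{1/(p+2)} dμ)^{p+2} (the integrand interpreted as 0 where A = 0). -/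
open MeasureTheory

/-- The minimal value of the continuous error estimate achieved by the optimal mesh
density `d*` is `∫ A·(d*)^{−(p+1)} dμ = N^{−(p+1)} · (∫ A^{1/(p+2)} dμ)^{p+2}`. -/
theorem optimal_density_minimal_error_value
    {Ω : Type*} [MeasurableSpace Ω] (μ : Measure Ω) (p : ℕ) (N : ℝ) (hN : 0 < N)
    (A : Ω → ℝ) (hAmeas : Measurable A) (hAnonneg : ∀ x, 0 ≤ A x)
    (hInt : Integrable (fun x => A x ^ (1 / (p + 2 : ℝ))) μ)
    (hIpos : 0 < ∫ x, A x ^ (1 / (p + 2 : ℝ)) ∂μ)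
    (dstar : Ω → ℝ)
    (hdstar : ∀ x, dstar x =
      N * A x ^ (1 / (p + 2 : ℝ)) / ∫ y, A y ^ (1 / (p + 2 : ℝ)) ∂μ) :
    ∫ x, A x * dstar x ^ (-(p + 1 : ℝ)) ∂μ =
      N ^ (-(p + 1 : ℝ)) * (∫ x, A x ^ (1 / (p + 2 : ℝ)) ∂μ) ^ (p + 2) := by
  set I : ℝ := ∫ x, A x ^ (1 / (p + 2 : ℝ)) ∂μ with hI
  have hp2 : (0:ℝ) < (p:ℝ) + 2 := by positivity
  have hexp : (1 / ((p:ℝ) + 2)) ≠ 0 := by positivity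
  have key : ∀ x, A x * dstar x ^ (-(p + 1 : ℝ)) =
      (N ^ (-(p + 1 : ℝ)) * I ^ (p + 1)) * A x ^ (1 / (p + 2 : ℝ)) := by
    intro x
    rcases (hAnonneg x).eq_or_lt with h | h
    · rw [hdstar x, ← h, Real.zero_rpow hexp]
      simp [Real.zero_rpow hexp]
    · have ha : 0 < A x ^ (1 / (p + 2 : ℝ)) := Real.rpow_pos_of_pos h _
      have hIe : (I ^ (-((p:ℝ) + 1)))⁻¹ = I ^ (p + 1) := by
        rw [← Real.rpow_neg hIpos.le, neg_neg, ← Real.rpow_natCast I (p+1)]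
        norm_num
      have hAe : A x * (A x ^ (1 / ((p:ℝ) + 2))) ^ (-((p:ℝ) + 1)) =
          A x ^ (1 / ((p:ℝ) + 2)) := by
        nth_rewrite 1 [← Real.rpow_one (A x)]
        rw [← Real.rpow_mul h.le, ← Real.rpow_add h]
        congr 1
        field_simp
        ring
      rw [hdstar x, div_eq_mul_inv,
        Real.mul_rpow (by positivity) (by positivity),
        Real.mul_rpow hN.le ha.le,
        Real.inv_rpow hIpos.le, hIe]
      linear_combination (N ^ (-((p:ℝ) + 1)) * I ^ (p + 1)) * hAe
  calc ∫ x, A x * dstar x ^ (-(p + 1 : ℝ)) ∂μ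
      = ∫ x, (N ^ (-(p + 1 : ℝ)) * I ^ (p + 1)) * A x ^ (1 / (p + 2 : ℝ)) ∂μ := by
        exact integral_congr_ae (Filter.Eventually.of_forall key)
    _ = (N ^ (-(p + 1 : ℝ)) * I ^ (p + 1)) * I := by
        rw [integral_const_mul]
    _ = N ^ (-(p + 1 : ℝ)) * I ^ (p + 2) := by ring
end

section
/- Let (Ω, μ) be a measure space, p a natural number, N > 0, and A : Ω → ℝ a measurable function with A > 0 a.e. and 0 < ∫_Ω A^{1/(p+2)} dμ < ∞. Define d*(x) = N · A(x)^{1/(p+2)} / ∫_Ω A^{1/(p+2)} dμ. If d : Ω → ℝ is measurable with d > 0 a.e., ∫_Ω d dμ = N, and ∫_Ω A · d^{−(p+1)} dμ = ∫_Ω A · (d*)^{−(p+1)} dμ < ∞, then d = d* almost everywhere; i.e. the optimal density distribution is the unique minimizer of the continuous error estimate at fixed complexity. -/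
/-!
Write `s = p + 1` and `c = d*`. Then `A = κ c^(s+1)` with `κ = (∫ A^(1/(s+1)) / N)^(s+1)`, so the
error of a density `d` is `κ ∫ c^(s+1) d^(-s)`. Weighted AM-GM with weights `1/(s+1)`, `s/(s+1)`
gives the pointwise bound `c^(s+1) d^(-s) + s d ≥ (s+1) c`, with equality only where `d = c`.
Since `∫ d = ∫ c = N`, the nonnegative gap between the two sides has integral `≤ 0` as soon as
`d` does no worse than `c`; so it vanishes a.e., and `d = c` a.e.
-/

open MeasureTheory Real

namespace Real

theorem weighted_geom_mean_rpow_add_one_mul_rpow_neg {s c t : ℝ} (hs : 0 < s)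
    (hc : 0 ≤ c) (ht : 0 < t) :
    (c ^ (s + 1) * t ^ (-s)) ^ (1 / (s + 1)) * t ^ (s / (s + 1)) = c := by
  have hs1 : s + 1 ≠ 0 := by positivity
  rw [mul_rpow (by positivity) (by positivity), ← rpow_mul hc, ← rpow_mul ht.le,
    mul_one_div_cancel hs1, rpow_one, mul_assoc, ← rpow_add ht, neg_mul, mul_one_div,
    neg_add_cancel, rpow_zero, mul_one]

theorem add_one_mul_le_rpow_add_one_mul_rpow_neg_add_mul {s c t : ℝ} (hs : 0 < s)
    (hc : 0 ≤ c) (ht : 0 < t) :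
    (s + 1) * c ≤ c ^ (s + 1) * t ^ (-s) + s * t := by
  have hs1 : 0 < s + 1 := by positivity
  have h := geom_mean_le_arith_mean2_weighted (w₁ := 1 / (s + 1)) (w₂ := s / (s + 1))
    (p₁ := c ^ (s + 1) * t ^ (-s)) (by positivity) (by positivity) (by positivity) ht.le
    (by field_simp; ring)
  rw [weighted_geom_mean_rpow_add_one_mul_rpow_neg hs hc ht] at h
  calc (s + 1) * c ≤ (s + 1) * (1 / (s + 1) * (c ^ (s + 1) * t ^ (-s)) + s / (s + 1) * t) := by
        gcongr
    _ = c ^ (s + 1) * t ^ (-s) + s * t := by field_simp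

theorem eq_of_rpow_add_one_mul_rpow_neg_add_mul_eq {s c t : ℝ} (hs : 0 < s)
    (hc : 0 ≤ c) (ht : 0 < t) (h : c ^ (s + 1) * t ^ (-s) + s * t = (s + 1) * c) :
    t = c := by
  have hs1 : 0 < s + 1 := by positivity
  have hgm := (geom_mean_eq_arith_mean2_weighted_iff_of_pos (w₁ := 1 / (s + 1))
    (w₂ := s / (s + 1)) (p₁ := c ^ (s + 1) * t ^ (-s)) (by positivity) (by positivity)
    (by positivity) ht.le (by field_simp; ring)).1 (by
      rw [weighted_geom_mean_rpow_add_one_mul_rpow_neg hs hc ht]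
      field_simp; linarith)
  have : c ^ (s + 1) = t ^ (s + 1) := by
    calc c ^ (s + 1) = c ^ (s + 1) * t ^ (-s) * t ^ s := by
          rw [mul_assoc, ← rpow_add ht, neg_add_cancel, rpow_zero, mul_one]
      _ = t ^ (s + 1) := by rw [hgm, rpow_add_one ht.ne', mul_comm]
  exact ((rpow_left_inj hc ht.le hs1.ne').1 this).symm

theorem rpow_add_one_mul_rpow_neg_self {s c : ℝ} (hc : 0 ≤ c) :
    c ^ (s + 1) * c ^ (-s) = c := by
  rw [← rpow_add' hc (by simp), add_neg_cancel_comm, rpow_one]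

end Real

theorem ae_eq_of_integral_rpow_add_one_mul_rpow_neg_le {Ω : Type*} [MeasurableSpace Ω]
    {μ : Measure Ω} {s : ℝ} (hs : 0 < s) {c d : Ω → ℝ} (hc : 0 ≤ᵐ[μ] c)
    (hd : ∀ᵐ x ∂μ, 0 < d x) (hci : Integrable c μ) (hdi : Integrable d μ)
    (hcdi : Integrable (fun x => c x ^ (s + 1) * d x ^ (-s)) μ)
    (hmass : ∫ x, d x ∂μ = ∫ x, c x ∂μ)
    (herr : ∫ x, c x ^ (s + 1) * d x ^ (-s) ∂μ ≤ ∫ x, c x ∂μ) :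
    d =ᵐ[μ] c := by
  have hsum_int : Integrable (fun x => c x ^ (s + 1) * d x ^ (-s) + s * d x) μ :=
    hcdi.add (hdi.const_mul s)
  have hgap_int : Integrable (fun x => c x ^ (s + 1) * d x ^ (-s) + s * d x - (s + 1) * c x) μ :=
    hsum_int.sub (hci.const_mul (s + 1))
  have hgap_nonneg : ∀ᵐ x ∂μ, 0 ≤ c x ^ (s + 1) * d x ^ (-s) + s * d x - (s + 1) * c x := by
    filter_upwards [hc, hd] with x hcx hdx
    exact sub_nonneg.2 (add_one_mul_le_rpow_add_one_mul_rpow_neg_add_mul hs hcx hdx)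
  have hgap_integral :
      ∫ x, c x ^ (s + 1) * d x ^ (-s) + s * d x - (s + 1) * c x ∂μ = 0 := by
    refine le_antisymm ?_ (integral_nonneg_of_ae hgap_nonneg)
    rw [integral_sub hsum_int (hci.const_mul (s + 1)), integral_add hcdi (hdi.const_mul s),
      integral_const_mul, integral_const_mul, hmass]
    linarith
  filter_upwards [(integral_eq_zero_iff_of_nonneg_ae hgap_nonneg hgap_int).1 hgap_integral,
    hc, hd] with x hx hcx hdx
  exact eq_of_rpow_add_one_mul_rpow_neg_add_mul_eq hs hcx hdx (sub_eq_zero.1 hx)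

theorem optimal_density_unique_minimizer_general
    {Ω : Type*} [MeasurableSpace Ω] (μ : Measure Ω) (p : ℕ) (N : ℝ) (hN : 0 < N)
    (A : Ω → ℝ) (hApos : ∀ᵐ x ∂μ, 0 < A x)
    (hInt : Integrable (fun x => A x ^ (1 / (p + 2 : ℝ))) μ)
    (hIpos : 0 < ∫ x, A x ^ (1 / (p + 2 : ℝ)) ∂μ)
    (dstar : Ω → ℝ)
    (hdstar : ∀ x, dstar x =
      N * A x ^ (1 / (p + 2 : ℝ)) / ∫ y, A y ^ (1 / (p + 2 : ℝ)) ∂μ)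
    (d : Ω → ℝ) (hdpos : ∀ᵐ x ∂μ, 0 < d x)
    (hdN : ∫ x, d x ∂μ = N)
    (hdInt : Integrable (fun x => A x * d x ^ (-(p + 1 : ℝ))) μ)
    (heq : ∫ x, A x * d x ^ (-(p + 1 : ℝ)) ∂μ =
      ∫ x, A x * dstar x ^ (-(p + 1 : ℝ)) ∂μ) :
    d =ᵐ[μ] dstar := by
  set s : ℝ := p + 1
  have hs : 0 < s := by positivity
  set k := N / ∫ y, A y ^ (1 / (p + 2 : ℝ)) ∂μ
  have hk : 0 < k := div_pos hN hIpos
  have hc : dstar = fun x => k * A x ^ (1 / (p + 2 : ℝ)) := by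
    funext x; rw [hdstar]; ring
  have hc_nonneg : 0 ≤ᵐ[μ] dstar := by
    filter_upwards [hApos] with x hx
    rw [hc]; positivity
  have hmass : ∫ x, dstar x ∂μ = N := by
    rw [hc, integral_const_mul]; exact div_mul_cancel₀ N hIpos.ne'
  have hscale : ∀ f : Ω → ℝ, (fun x => dstar x ^ (s + 1) * f x ^ (-s))
      =ᵐ[μ] fun x => k ^ (s + 1) * (A x * f x ^ (-s)) := fun f => by
    filter_upwards [hApos] with x hx
    have hs2 : (p + 2 : ℝ) = s + 1 := by ring
    rw [hc, hs2, mul_rpow hk.le (by positivity), one_div, rpow_inv_rpow hx.le (by positivity),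
      mul_assoc]
  refine ae_eq_of_integral_rpow_add_one_mul_rpow_neg_le hs hc_nonneg hdpos
    (hc ▸ hInt.const_mul k) (Integrable.of_integral_ne_zero (hdN ▸ hN.ne'))
    ((hdInt.const_mul _).congr (hscale d).symm) (hdN.trans hmass.symm) (le_of_eq ?_)
  calc ∫ x, dstar x ^ (s + 1) * d x ^ (-s) ∂μ
      = ∫ x, dstar x ^ (s + 1) * dstar x ^ (-s) ∂μ := by
        rw [integral_congr_ae (hscale d), integral_congr_ae (hscale dstar), integral_const_mul,
          integral_const_mul, heq]
    _ = ∫ x, dstar x ∂μ :=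
        integral_congr_ae (hc_nonneg.mono fun x hx => rpow_add_one_mul_rpow_neg_self hx)

/-- Uniqueness of the optimal mesh density: if a positive density `d` of complexity
`N` achieves the same (finite) value of the continuous error estimate as the
optimal density `d*`, then `d = d*` almost everywhere. -/
theorem optimal_density_unique_minimizer
    {Ω : Type*} [MeasurableSpace Ω] (μ : Measure Ω) (p : ℕ) (N : ℝ) (hN : 0 < N)
    (A : Ω → ℝ) (hAmeas : Measurable A) (hApos : ∀ᵐ x ∂μ, 0 < A x)
    (hInt : Integrable (fun x => A x ^ (1 / (p + 2 : ℝ))) μ)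
    (hIpos : 0 < ∫ x, A x ^ (1 / (p + 2 : ℝ)) ∂μ)
    (dstar : Ω → ℝ)
    (hdstar : ∀ x, dstar x =
      N * A x ^ (1 / (p + 2 : ℝ)) / ∫ y, A y ^ (1 / (p + 2 : ℝ)) ∂μ)
    (d : Ω → ℝ) (hdmeas : Measurable d) (hdpos : ∀ᵐ x ∂μ, 0 < d x)
    (hdN : ∫ x, d x ∂μ = N)
    (hdInt : Integrable (fun x => A x * d x ^ (-(p + 1 : ℝ))) μ)
    (heq : ∫ x, A x * d x ^ (-(p + 1 : ℝ)) ∂μ =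
      ∫ x, A x * dstar x ^ (-(p + 1 : ℝ)) ∂μ) :
    d =ᵐ[μ] dstar :=
  optimal_density_unique_minimizer_general μ p N hN A hApos hInt hIpos dstar hdstar d hdpos hdN
    hdInt heq
end

section
/- Let n ≥ 1, let a₁, …, aₙ be positive reals, let s > 0 and N > 0. Then for all positive reals d₁, …, dₙ with Σ dᵢ = N one has Σ aᵢ dᵢ^{−s} ≥ N^{−s} (Σ aᵢ^{1/(s+1)})^{s+1}, and equality holds for dᵢ = N aᵢ^{1/(s+1)} / Σ_j a_j^{1/(s+1)}. In particular, with s = p + 1 and aₖ the local error contributions, the optimized total error satisfies E* = (α/N)^{(p+1)/2} (Σ_k ηₖ^{2/(p+2)})^{(p+2)/2}, where aₖ = ηₖ² α^{p+1} and ηₖ is the local energy error. -/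
open Finset Real

/-!
With `bᵢ = aᵢ^{1/(s+1)}` the claim is Radon's inequality
`∑ bᵢ^{s+1} dᵢ^{-s} ≥ (∑ bᵢ)^{s+1} (∑ dᵢ)^{-s}`, which is Hölder's inequality with weights `dᵢ`
applied to the ratios `bᵢ / dᵢ`; equality holds when these ratios are constant, i.e. `dᵢ ∝ bᵢ`.
Substituting `s = p + 1` and `aₖ = ηₖ² α^{p+1}` makes `∑ₖ aₖ^{1/(p+2)}` equal to
`α^{(p+1)/(p+2)} ∑ₖ ηₖ^{2/(p+2)}`, and `E*` is the square root of the optimal value.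
-/

section

variable {ι : Type*} (t : Finset ι) {s : ℝ}

theorem radon_inequality (hs : 0 ≤ s) {b d : ι → ℝ} (hb : ∀ i, 0 ≤ b i) (hd : ∀ i, 0 < d i) :
    (∑ i ∈ t, b i) ^ (s + 1) ≤ (∑ i ∈ t, d i) ^ s * ∑ i ∈ t, b i ^ (s + 1) * d i ^ (-s) := by
  have hp : 1 ≤ s + 1 := by linarith
  have holder := inner_le_weight_mul_Lp_of_nonneg t hp d (fun i => b i / d i)
    (fun i => (hd i).le) (fun i => div_nonneg (hb i) (hd i).le)
  have hlin : ∀ i, d i * (b i / d i) = b i := fun i => mul_div_cancel₀ _ (hd i).ne'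
  have hpow : ∀ i, d i * (b i / d i) ^ (s + 1) = b i ^ (s + 1) * d i ^ (-s) := fun i => by
    have := (hd i).ne'
    rw [div_rpow (hb i) (hd i).le, rpow_add (hd i), rpow_one, rpow_neg (hd i).le]
    field_simp
  simp only [hlin, hpow] at holder
  have hD : 0 ≤ ∑ i ∈ t, d i := sum_nonneg fun i _ => (hd i).le
  have hE : 0 ≤ ∑ i ∈ t, b i ^ (s + 1) * d i ^ (-s) :=
    sum_nonneg fun i _ => mul_nonneg (rpow_nonneg (hb i) _) (rpow_nonneg (hd i).le _)
  calc (∑ i ∈ t, b i) ^ (s + 1)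
      ≤ ((∑ i ∈ t, d i) ^ (1 - (s + 1)⁻¹) * (∑ i ∈ t, b i ^ (s + 1) * d i ^ (-s)) ^ (s + 1)⁻¹)
          ^ (s + 1) := rpow_le_rpow (sum_nonneg fun i _ => hb i) holder (by linarith)
    _ = (∑ i ∈ t, d i) ^ s * ∑ i ∈ t, b i ^ (s + 1) * d i ^ (-s) := by
      rw [mul_rpow (rpow_nonneg hD _) (rpow_nonneg hE _), ← rpow_mul hD,
        rpow_inv_rpow hE (by linarith)]
      congr 2
      field_simp
      ring

theorem radon_eq_of_proportional (hs : s + 1 ≠ 0) {N : ℝ} (hN : 0 ≤ N) {b : ι → ℝ}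
    (hb : ∀ i, 0 ≤ b i) :
    ∑ i ∈ t, b i ^ (s + 1) * (N * b i / ∑ j ∈ t, b j) ^ (-s) =
      N ^ (-s) * (∑ i ∈ t, b i) ^ (s + 1) := by
  set B := ∑ j ∈ t, b j
  have hB : 0 ≤ B := sum_nonneg fun i _ => hb i
  have hterm : ∀ i, b i ^ (s + 1) * (N * b i / B) ^ (-s) = N ^ (-s) * B ^ s * b i := fun i => by
    have hcancel : b i ^ (s + 1) * b i ^ (-s) = b i := by
      rw [← rpow_add' (hb i) (by norm_num), add_neg_cancel_comm, rpow_one]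
    rw [div_rpow (mul_nonneg hN (hb i)) hB, mul_rpow hN (hb i), rpow_neg hB, div_inv_eq_mul]
    linear_combination (N ^ (-s) * B ^ s) * hcancel
  rw [sum_congr rfl fun i _ => hterm i, ← mul_sum, rpow_add' hB hs, rpow_one, mul_assoc]

theorem rpow_neg_mul_sum_rpow_le_sum_mul_rpow_neg (hs : 0 ≤ s) {a d : ι → ℝ}
    (ha : ∀ i, 0 ≤ a i) (hd : ∀ i, 0 < d i) (hD : 0 < ∑ i ∈ t, d i) :
    (∑ i ∈ t, d i) ^ (-s) * (∑ i ∈ t, a i ^ (1 / (s + 1))) ^ (s + 1) ≤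
      ∑ i ∈ t, a i * d i ^ (-s) := by
  have hroot : ∀ i, (a i ^ (1 / (s + 1))) ^ (s + 1) = a i := fun i => by
    rw [one_div, rpow_inv_rpow (ha i) (by linarith)]
  have radon := radon_inequality t hs (fun i => rpow_nonneg (ha i) (1 / (s + 1))) hd
  simp only [hroot] at radon
  rwa [rpow_neg hD.le, inv_mul_le_iff₀ (rpow_pos_of_pos hD s)]

theorem sum_mul_rpow_neg_of_proportional_rpow (hs : s + 1 ≠ 0) {N : ℝ} (hN : 0 ≤ N)
    {a : ι → ℝ} (ha : ∀ i, 0 ≤ a i) :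
    ∑ i ∈ t, a i * (N * a i ^ (1 / (s + 1)) / ∑ j ∈ t, a j ^ (1 / (s + 1))) ^ (-s) =
      N ^ (-s) * (∑ i ∈ t, a i ^ (1 / (s + 1))) ^ (s + 1) := by
  have hroot : ∀ i, (a i ^ (1 / (s + 1))) ^ (s + 1) = a i := fun i => by
    rw [one_div, rpow_inv_rpow (ha i) hs]
  simpa only [hroot] using radon_eq_of_proportional t hs hN fun i => rpow_nonneg (ha i) (1 / (s + 1))

theorem sqrt_rpow_mul_rpow {x y : ℝ} (hx : 0 ≤ x) (hy : 0 ≤ y) (u v : ℝ) :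
    √(x ^ u * y ^ v) = x ^ (u / 2) * y ^ (v / 2) := by
  rw [sqrt_eq_rpow, mul_rpow (rpow_nonneg hx _) (rpow_nonneg hy _), ← rpow_mul hx,
    ← rpow_mul hy, mul_one_div, mul_one_div]

theorem sum_sq_mul_pow_rpow (p : ℕ) {α : ℝ} (hα : 0 ≤ α) {η : ι → ℝ} (hη : ∀ k, 0 ≤ η k) :
    ∑ k ∈ t, (η k ^ 2 * α ^ (p + 1)) ^ (1 / ((p : ℝ) + 2)) =
      α ^ (((p : ℝ) + 1) / ((p : ℝ) + 2)) * ∑ k ∈ t, η k ^ ((2 : ℝ) / ((p : ℝ) + 2)) := by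
  rw [mul_sum]
  refine sum_congr rfl fun k _ => ?_
  rw [mul_rpow (pow_nonneg (hη k) 2) (pow_nonneg hα _), ← rpow_natCast_mul (hη k),
    ← rpow_natCast_mul hα, mul_comm]
  push_cast
  ring_nf

theorem sqrt_optimal_error_eq (p : ℕ) {α N : ℝ} (hα : 0 ≤ α) (hN : 0 ≤ N) {η : ι → ℝ}
    (hη : ∀ k, 0 ≤ η k) :
    √(N ^ (-((p : ℝ) + 1)) *
        (∑ k ∈ t, (η k ^ 2 * α ^ (p + 1)) ^ (1 / ((p : ℝ) + 2))) ^ ((p : ℝ) + 2)) =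
      (α / N) ^ (((p : ℝ) + 1) / 2) *
        (∑ k ∈ t, η k ^ ((2 : ℝ) / ((p : ℝ) + 2))) ^ (((p : ℝ) + 2) / 2) := by
  rw [sum_sq_mul_pow_rpow t p hα hη]
  set T := ∑ k ∈ t, η k ^ ((2 : ℝ) / ((p : ℝ) + 2))
  have hT : 0 ≤ T := sum_nonneg fun k _ => rpow_nonneg (hη k) _
  have hsplit : N ^ (-((p : ℝ) + 1)) * (α ^ (((p : ℝ) + 1) / ((p : ℝ) + 2)) * T) ^ ((p : ℝ) + 2) =
      (α / N) ^ ((p : ℝ) + 1) * T ^ ((p : ℝ) + 2) := by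
    rw [mul_rpow (rpow_nonneg hα _) hT, ← rpow_mul hα, div_mul_cancel₀ _ (by positivity),
      div_rpow hα hN, rpow_neg hN]
    ring
  rw [hsplit, sqrt_rpow_mul_rpow (div_nonneg hα hN) hT]

end

theorem discrete_mesh_optimization_general
    (n : ℕ) (a : Fin n → ℝ) (ha : ∀ i, 0 < a i)
    (s : ℝ) (hs : 0 < s) (N : ℝ) (hN : 0 < N) :
    (∀ d : Fin n → ℝ, (∀ i, 0 < d i) → (∑ i, d i = N) →
        N ^ (-s) * (∑ i, a i ^ (1 / (s + 1))) ^ (s + 1) ≤ ∑ i, a i * d i ^ (-s)) ∧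
    (∀ d : Fin n → ℝ,
        (∀ i, d i = N * a i ^ (1 / (s + 1)) / ∑ j, a j ^ (1 / (s + 1))) →
        ∑ i, a i * d i ^ (-s) = N ^ (-s) * (∑ i, a i ^ (1 / (s + 1))) ^ (s + 1)) ∧
    (∀ (p : ℕ) (η : Fin n → ℝ), (∀ k, 0 < η k) → s = (p : ℝ) + 1 →
        (∀ k, a k = η k ^ 2 * (3 * Real.sqrt 3 / 4) ^ (p + 1)) →
        Real.sqrt (N ^ (-s) * (∑ i, a i ^ (1 / (s + 1))) ^ (s + 1)) =
          ((3 * Real.sqrt 3 / 4) / N) ^ (((p : ℝ) + 1) / 2) *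
            (∑ k, η k ^ ((2 : ℝ) / ((p : ℝ) + 2))) ^ (((p : ℝ) + 2) / 2)) := by
  have ha' : ∀ i, 0 ≤ a i := fun i => (ha i).le
  refine ⟨fun d hd hsum => ?_, fun d hd => ?_, fun p η hη hsp hak => ?_⟩
  · subst hsum
    exact rpow_neg_mul_sum_rpow_le_sum_mul_rpow_neg univ hs.le ha' hd hN
  · simp only [hd]
    exact sum_mul_rpow_neg_of_proportional_rpow univ (by linarith) hN.le ha'
  · have hs2 : s + 1 = (p : ℝ) + 2 := by rw [hsp]; ring
    simp only [hak]
    rw [hs2, hsp]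
    exact sqrt_optimal_error_eq univ p (by positivity) hN.le fun k => (hη k).le

/-- Discrete form of the continuous mesh optimization: for positive weights `aᵢ`,
the weighted sum `Σ aᵢ dᵢ^{−s}` over positive densities with `Σ dᵢ = N` is bounded
below by `N^{−s} (Σ aᵢ^{1/(s+1)})^{s+1}`, with equality for the optimal densities
`dᵢ = N aᵢ^{1/(s+1)} / Σⱼ aⱼ^{1/(s+1)}`.  In particular, with `s = p + 1`,
`α = 3√3/4` and local error contributions `aₖ = ηₖ² α^{p+1}`, the optimized total
error is `E* = (α/N)^{(p+1)/2} (Σₖ ηₖ^{2/(p+2)})^{(p+2)/2}`. -/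
theorem discrete_mesh_optimization
    (n : ℕ) (hn : 1 ≤ n) (a : Fin n → ℝ) (ha : ∀ i, 0 < a i)
    (s : ℝ) (hs : 0 < s) (N : ℝ) (hN : 0 < N) :
    (∀ d : Fin n → ℝ, (∀ i, 0 < d i) → (∑ i, d i = N) →
        N ^ (-s) * (∑ i, a i ^ (1 / (s + 1))) ^ (s + 1) ≤ ∑ i, a i * d i ^ (-s)) ∧
    (∀ d : Fin n → ℝ,
        (∀ i, d i = N * a i ^ (1 / (s + 1)) / ∑ j, a j ^ (1 / (s + 1))) →
        ∑ i, a i * d i ^ (-s) = N ^ (-s) * (∑ i, a i ^ (1 / (s + 1))) ^ (s + 1)) ∧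
    (∀ (p : ℕ) (η : Fin n → ℝ), (∀ k, 0 < η k) → s = (p : ℝ) + 1 →
        (∀ k, a k = η k ^ 2 * (3 * Real.sqrt 3 / 4) ^ (p + 1)) →
        Real.sqrt (N ^ (-s) * (∑ i, a i ^ (1 / (s + 1))) ^ (s + 1)) =
          ((3 * Real.sqrt 3 / 4) / N) ^ (((p : ℝ) + 1) / 2) *
            (∑ k, η k ^ ((2 : ℝ) / ((p : ℝ) + 2))) ^ (((p : ℝ) + 2) / 2)) :=
  discrete_mesh_optimization_general n a ha s hs N hN
end

section
/- Let U and V be real Banach spaces, L : U ≃L[ℝ] V' a continuous linear equivalence onto the dual of V, f ∈ V', and u = L⁻¹ f. Let u_h ∈ U, let J ∈ U' be a target functional, and let z_h ∈ V satisfy the Galerkin orthogonality (L u_h − f)(z_h) = 0. Then the error in the target functional satisfies |J(u − u_h)| ≤ ‖L⁻¹‖ · ‖L u_h − f‖_{V'} · ‖L* z_h − J‖_{U'}, where L* : V → U' denotes the adjoint action (L* z)(w) = (L w)(z). -/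
/-- Goal-oriented error bound for DPG: if `u = L⁻¹ f` and the residual of `u_h`
vanishes at the discrete adjoint solution `z_h`, then
`|J(u − u_h)| ≤ ‖L⁻¹‖ · ‖L u_h − f‖_{V'} · ‖L* z_h − J‖_{U'}`, where
`(L* z)(w) = (L w)(z)` is the adjoint action. -/
theorem dpg_goal_error_bound
    {U V : Type*} [NormedAddCommGroup U] [NormedSpace ℝ U] [CompleteSpace U]
    [NormedAddCommGroup V] [NormedSpace ℝ V] [CompleteSpace V]
    (L : U ≃L[ℝ] (V →L[ℝ] ℝ)) (f : V →L[ℝ] ℝ) (u : U) (hu : u = L.symm f)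
    (u_h : U) (J : U →L[ℝ] ℝ) (z_h : V)
    (horth : (L u_h - f) z_h = 0) :
    |J (u - u_h)| ≤
      ‖(L.symm : (V →L[ℝ] ℝ) →L[ℝ] U)‖ * ‖L u_h - f‖ *
        ‖(L : U →L[ℝ] (V →L[ℝ] ℝ)).flip z_h - J‖ := by
  have hLu : L u = f := by rw [hu]; simp
  have hkey : J (u - u_h) = -(((L : U →L[ℝ] (V →L[ℝ] ℝ)).flip z_h - J) (u - u_h)) := by
    have h1 : ((L : U →L[ℝ] (V →L[ℝ] ℝ)).flip z_h) (u - u_h) = 0 := by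
      simp only [ContinuousLinearMap.flip_apply, map_sub, ContinuousLinearMap.sub_apply]
      have := horth
      simp only [ContinuousLinearMap.sub_apply] at this
      rw [ContinuousLinearEquiv.coe_coe, hLu]
      linarith
    simp only [ContinuousLinearMap.sub_apply, h1]
    ring
  rw [hkey, abs_neg]
  calc |((L : U →L[ℝ] (V →L[ℝ] ℝ)).flip z_h - J) (u - u_h)|
      ≤ ‖(L : U →L[ℝ] (V →L[ℝ] ℝ)).flip z_h - J‖ * ‖u - u_h‖ :=
        ((L : U →L[ℝ] (V →L[ℝ] ℝ)).flip z_h - J).le_opNorm _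
    _ ≤ ‖(L : U →L[ℝ] (V →L[ℝ] ℝ)).flip z_h - J‖ *
          (‖(L.symm : (V →L[ℝ] ℝ) →L[ℝ] U)‖ * ‖L u_h - f‖) := by
        apply mul_le_mul_of_nonneg_left _ (norm_nonneg _)
        have : u - u_h = L.symm (f - L u_h) := by
          rw [map_sub, ← hu]
          simp
        rw [this]
        calc ‖(L.symm : (V →L[ℝ] ℝ) →L[ℝ] U) (f - L u_h)‖
            ≤ ‖(L.symm : (V →L[ℝ] ℝ) →L[ℝ] U)‖ * ‖f - L u_h‖ :=
              ContinuousLinearMap.le_opNorm _ _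
          _ = ‖(L.symm : (V →L[ℝ] ℝ) →L[ℝ] U)‖ * ‖L u_h - f‖ := by rw [norm_sub_rev]
    _ = ‖(L.symm : (V →L[ℝ] ℝ) →L[ℝ] U)‖ * ‖L u_h - f‖ *
          ‖(L : U →L[ℝ] (V →L[ℝ] ℝ)).flip z_h - J‖ := by ring
end
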